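/- arXiv:1601.04696 — 4 statements merged into one kernel-verified Lean document; each statement's English description precedes it below -/
import Mathlib

section
/- Let ψ be an entire function with |ψ(z)| ≤ C0·exp(σ|z|^ρ) for all |z| ≥ r0 and |ψ(x) − 1| ≤ C1·x^{−μ} for all real x ≥ r0, where C0, C1, σ, μ, ρ > 0 and r0 ≥ 1. Let n(r) denote the number of zeros of ψ, counted with multiplicity, in the closed disk of radius r centered at 0. Set r1 = max( r0, (2C1)^{1/μ}, (1/(2e))·(ln(2C0)/σ)^{1/ρ} ). Then for every r ≥ r1 one has n(r) ≤ 2σ·(2e)^ρ·r^ρ. -/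
/-!
Factor a zero `a` of `ψ` in the disk `|z| ≤ r` out of `ψ` and replace `z - a` by the Blaschke
numerator `(R² - ā z) / R`, where `R = 2er`. This does not change `|ψ|` on the circle `|z| = R`,
and at the point `r` it multiplies `|ψ(r)|` by at least `e`. Removing all `n(r)` zeros this way
and applying the maximum principle gives `e^{n(r)} |ψ(r)| ≤ C₀ exp(σ R^ρ)`. As `|ψ(r)| ≥ 1/2`
by the estimate on the real ray, `n(r) ≤ log(2C₀) + σ R^ρ ≤ 2σ R^ρ`.
-/

open Metric Set Function ComplexConjugate

section ZeroCount

variable {𝕜 E : Type*} [NontriviallyNormedField 𝕜] [NormedAddCommGroup E] [NormedSpace 𝕜 E]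

/-- A function vanishing identically near `z` has order `⊤` there, which contributes `0`. -/
noncomputable def zeroCountOn (f : 𝕜 → E) (s : Set 𝕜) : ℕ :=
  ∑ᶠ z ∈ s, analyticOrderNatAt f z

lemma AnalyticOnNhd.finite_inter_support_analyticOrderNatAt {f : 𝕜 → E} {K : Set 𝕜}
    (hf : AnalyticOnNhd 𝕜 f K) (hK : IsCompact K) :
    (K ∩ support (analyticOrderNatAt f)).Finite := by
  refine ((MeromorphicOn.divisor f K).finiteSupport hK).subset fun z ⟨hzK, hz⟩ => ?_
  have hz : analyticOrderAt f z ≠ 0 ∧ analyticOrderAt f z ≠ ⊤ := by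
    simpa [analyticOrderNatAt] using hz
  obtain ⟨n, hn⟩ := ENat.ne_top_iff_exists.mp hz.2
  rw [← hn] at hz
  simp_all [MeromorphicOn.AnalyticOnNhd.divisor_apply hf hzK]

lemma zeroCountOn_mul {f g : 𝕜 → 𝕜} {K : Set 𝕜} (hK : IsCompact K) (hf : AnalyticOnNhd 𝕜 f K)
    (hg : AnalyticOnNhd 𝕜 g K) (hf' : ∀ z ∈ K, analyticOrderAt f z ≠ ⊤)
    (hg' : ∀ z ∈ K, analyticOrderAt g z ≠ ⊤) :
    zeroCountOn (f * g) K = zeroCountOn f K + zeroCountOn g K := by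
  rw [zeroCountOn, zeroCountOn, zeroCountOn, ← finsum_mem_add_distrib'
    (hf.finite_inter_support_analyticOrderNatAt hK) (hg.finite_inter_support_analyticOrderNatAt hK)]
  exact finsum_mem_congr rfl fun z hz =>
    analyticOrderNatAt_mul (hf z hz) (hg z hz) (hf' z hz) (hg' z hz)

lemma zeroCountOn_eq_zero {f : 𝕜 → E} {s : Set 𝕜} (hf : ∀ z ∈ s, f z ≠ 0) :
    zeroCountOn f s = 0 :=
  finsum_mem_of_eqOn_zero fun z hz => by
    by_contra h
    exact hf z hz (apply_eq_zero_of_analyticOrderNatAt_ne_zero h)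

lemma zeroCountOn_sub_const {a : 𝕜} {s : Set 𝕜} (ha : a ∈ s) : zeroCountOn (· - a) s = 1 := by
  rw [zeroCountOn, finsum_mem_def, finsum_eq_single _ a]
  · simp [ha, analyticOrderNatAt]
  · intro z hz
    simp [analyticOrderNatAt, hz]

lemma zeroCountOn_sub_const_mul {g : 𝕜 → 𝕜} {a : 𝕜} {K : Set 𝕜} (hK : IsCompact K) (ha : a ∈ K)
    (hg : AnalyticOnNhd 𝕜 g K) (hg' : ∀ z ∈ K, analyticOrderAt g z ≠ ⊤) :
    zeroCountOn ((· - a) * g) K = zeroCountOn g K + 1 := by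
  rw [zeroCountOn_mul hK (fun z _ => by fun_prop) hg (fun z _ => ?_) hg', zeroCountOn_sub_const ha,
    add_comm]
  by_cases hz : z = a <;> simp [hz]

lemma zeroCountOn_mul_of_ne_zero {u g : 𝕜 → 𝕜} {K : Set 𝕜} (hK : IsCompact K)
    (hu : AnalyticOnNhd 𝕜 u K) (hu_ne : ∀ z ∈ K, u z ≠ 0) (hg : AnalyticOnNhd 𝕜 g K)
    (hg' : ∀ z ∈ K, analyticOrderAt g z ≠ ⊤) :
    zeroCountOn (u * g) K = zeroCountOn g K := by
  rw [zeroCountOn_mul hK hu hg (fun z hz => ?_) hg', zeroCountOn_eq_zero hu_ne, zero_add]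
  simp [analyticOrderAt_eq_zero.2 (Or.inr (hu_ne z hz))]

lemma eq_sub_mul_dslope {f : 𝕜 → 𝕜} {a : 𝕜} (ha : f a = 0) : f = (· - a) * dslope f a := by
  funext z
  simpa [ha] using (sub_smul_dslope f a z).symm

end ZeroCount

namespace Complex

lemma norm_sq_sub_conj_mul_of_norm_eq {R : ℝ} {z : ℂ} (hz : ‖z‖ = R) (a : ℂ) :
    ‖(R : ℂ) ^ 2 - conj a * z‖ = R * ‖z - a‖ := by
  have hR : (R : ℂ) ^ 2 = z * conj z := by
    rw [mul_conj, normSq_eq_norm_sq, hz]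
    push_cast
    ring
  rw [hR, show z * conj z - conj a * z = z * conj (z - a) by rw [map_sub]; ring, norm_mul,
    norm_conj, hz]

lemma sq_sub_conj_mul_ne_zero {r R : ℝ} {a z : ℂ} (hrR : r < R) (ha : ‖a‖ ≤ r) (hz : ‖z‖ ≤ r) :
    (R : ℂ) ^ 2 - conj a * z ≠ 0 := by
  have hr : 0 ≤ r := (norm_nonneg a).trans ha
  have : ‖conj a * z‖ < ‖(R : ℂ) ^ 2‖ := by
    rw [norm_mul, norm_conj, norm_pow, norm_real, Real.norm_eq_abs, sq_abs]
    nlinarith [norm_nonneg a, norm_nonneg z]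
  intro h
  rw [sub_eq_zero.mp h] at this
  exact this.false

lemma sq_add_sq_mul_norm_sub_le {r R : ℝ} {a : ℂ} (hrR : r ≤ R) (ha : ‖a‖ ≤ r) :
    (R ^ 2 + r ^ 2) * ‖(r : ℂ) - a‖ ≤ 2 * r * ‖(R : ℂ) ^ 2 - conj a * r‖ := by
  have hr : 0 ≤ r := (norm_nonneg a).trans ha
  refine le_of_sq_le_sq ?_ (by positivity)
  have hre : -r ≤ a.re := by linarith [abs_le.mp ((abs_re_le_norm a).trans ha)]
  have hnorm : a.re ^ 2 + a.im ^ 2 ≤ r ^ 2 := by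
    rw [← sq_norm_sub_sq_re a]
    nlinarith [norm_nonneg a]
  have hS : r ^ 2 ≤ R ^ 2 := by gcongr
  rw [mul_pow, mul_pow, Complex.sq_norm, Complex.sq_norm, normSq_apply, normSq_apply]
  simp only [sub_re, sub_im, ofReal_re, ofReal_im, mul_re, mul_im, conj_re, conj_im, pow_two]
  -- the difference of the two sides is `(R² - r²) ((r² - |a|²)(R² + 3r²) + 2r(R² - r²)(r + Re a))`
  nlinarith [mul_nonneg (sub_nonneg.mpr hS) (mul_nonneg (sub_nonneg.mpr hnorm)
      (by positivity : (0 : ℝ) ≤ R ^ 2 + 3 * r ^ 2)),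
    mul_nonneg (sub_nonneg.mpr hS) (mul_nonneg (mul_nonneg hr (sub_nonneg.mpr hS))
      (by linarith : (0 : ℝ) ≤ r + a.re))]

lemma mul_mul_norm_sub_le {r q : ℝ} {a : ℂ} (hr : 0 < r) (hq : 1 ≤ 2 * q) (ha : ‖a‖ ≤ r) :
    q * (2 * q * r) * ‖(r : ℂ) - a‖ ≤ ‖((2 * q * r : ℝ) : ℂ) ^ 2 - conj a * r‖ := by
  have := sq_add_sq_mul_norm_sub_le (by nlinarith : r ≤ 2 * q * r) ha
  refine le_of_mul_le_mul_left ?_ (by positivity : 0 < 2 * r)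
  nlinarith [norm_nonneg ((r : ℂ) - a)]

theorem pow_zeroCountOn_mul_norm_le {r R q M : ℝ} {w : ℂ} (hr : 0 ≤ r) (hrR : r < R) (hw : ‖w‖ ≤ R)
    (hq : 0 ≤ q) (hqw : ∀ a ∈ closedBall (0 : ℂ) r, q * R * ‖w - a‖ ≤ ‖(R : ℂ) ^ 2 - conj a * w‖)
    {f : ℂ → ℂ} (hf : Differentiable ℂ f) (hM : ∀ z ∈ sphere (0 : ℂ) R, ‖f z‖ ≤ M) :
    q ^ zeroCountOn f (closedBall 0 r) * ‖f w‖ ≤ M := by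
  have hR : 0 < R := hr.trans_lt hrR
  induction hN : zeroCountOn f (closedBall 0 r) generalizing f with
  | zero =>
    rw [pow_zero, one_mul]
    refine norm_le_of_forall_mem_frontier_norm_le (isBounded_ball (x := 0) (r := R))
      hf.diffContOnCl (fun z hz => hM z ?_) ?_
    · rwa [frontier_ball 0 hR.ne'] at hz
    · rwa [closure_ball 0 hR.ne', mem_closedBall_zero_iff]
  | succ N ih =>
    obtain ⟨a, ha, hfa⟩ := exists_ne_zero_of_finsum_mem_ne_zero (hN.trans_ne N.succ_ne_zero)
    have ha' : ‖a‖ ≤ r := mem_closedBall_zero_iff.mp ha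
    have hfa_top : analyticOrderAt f a ≠ ⊤ := fun h => hfa (by simp [analyticOrderNatAt, h])
    set g := dslope f a
    have hg : Differentiable ℂ g := by
      rw [← differentiableOn_univ] at hf ⊢
      exact (differentiableOn_dslope Filter.univ_mem).mpr hf
    have hfg : f = (· - a) * g :=
      eq_sub_mul_dslope (apply_eq_zero_of_analyticOrderNatAt_ne_zero hfa)
    have hg_top : ∀ z ∈ closedBall (0 : ℂ) r, analyticOrderAt g z ≠ ⊤ := fun z _ h => by
      have := AnalyticOnNhd.analyticOrderAt_ne_top_of_isPreconnected (fun z _ => hf.analyticAt z)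
        isPreconnected_univ (mem_univ a) (mem_univ z) hfa_top
      rw [hfg, analyticOrderAt_mul_eq_top_of_right h] at this
      exact this rfl
    set u : ℂ → ℂ := fun z => ((R : ℂ) ^ 2 - conj a * z) / R
    have hu : Differentiable ℂ u := by fun_prop
    have hnorm_u : ∀ z, ‖u z‖ = ‖(R : ℂ) ^ 2 - conj a * z‖ / R := fun z => by
      simp [u, abs_of_pos hR]
    have hcount : zeroCountOn (u * g) (closedBall 0 r) = N := by
      have hK := isCompact_closedBall (0 : ℂ) r
      have hg' : AnalyticOnNhd ℂ g (closedBall 0 r) := fun z _ => hg.analyticAt z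
      rw [hfg, zeroCountOn_sub_const_mul hK ha hg' hg_top] at hN
      rw [zeroCountOn_mul_of_ne_zero hK (fun z _ => hu.analyticAt z) (fun z hz => div_ne_zero
        (sq_sub_conj_mul_ne_zero hrR ha' (mem_closedBall_zero_iff.mp hz))
        (ofReal_ne_zero.mpr hR.ne')) hg' hg_top]
      exact Nat.succ_injective hN
    have hM' : ∀ z ∈ sphere (0 : ℂ) R, ‖(u * g) z‖ ≤ M := fun z hz => by
      have hz : ‖z‖ = R := mem_sphere_zero_iff_norm.mp hz
      calc ‖(u * g) z‖ = ‖f z‖ := by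
            rw [hfg, Pi.mul_apply, Pi.mul_apply, norm_mul, norm_mul, hnorm_u,
              norm_sq_sub_conj_mul_of_norm_eq hz]
            field_simp
        _ ≤ M := hM z (mem_sphere_zero_iff_norm.mpr hz)
    calc q ^ (N + 1) * ‖f w‖ = q ^ N * (q * R * ‖w - a‖ / R * ‖g w‖) := by
          rw [hfg, Pi.mul_apply, norm_mul]
          field_simp
          ring
      _ ≤ q ^ N * ‖(u * g) w‖ := by
          rw [Pi.mul_apply, norm_mul, hnorm_u]
          gcongr
          exact hqw a ha
      _ ≤ M := ih (hu.mul hg) hM' hcount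

end Complex

open Real

lemma mul_rpow_neg_le_half {C μ r : ℝ} (hC : 0 < C) (hμ : 0 < μ) (hr : 0 < r)
    (h : (2 * C) ^ (1 / μ) ≤ r) : C * r ^ (-μ) ≤ 1 / 2 := by
  rw [one_div, rpow_inv_le_iff_of_pos (by positivity) hr.le hμ] at h
  rw [rpow_neg hr.le, ← div_eq_mul_inv, div_le_iff₀ (by positivity)]
  linarith

lemma log_le_mul_rpow {C σ ρ R : ℝ} (hσ : 0 < σ) (hρ : 0 < ρ) (hR : 0 ≤ R)
    (h : (log C / σ) ^ (1 / ρ) ≤ R) : log C ≤ σ * R ^ ρ := by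
  rcases le_or_gt (log C) 0 with hC | hC
  · exact hC.trans (by positivity)
  · rw [one_div, rpow_inv_le_iff_of_pos (by positivity) hR hρ, div_le_iff₀ hσ] at h
    linarith

/-- for an entire function `ψ` with `|ψ(z)| ≤ C₀ e^{σ|z|^ρ}` for `|z| ≥ r₀`
and `|ψ(x) - 1| ≤ C₁ x^{-μ}` on the real ray `x ≥ r₀`, the number `n(r)` of zeros of `ψ`
(with multiplicity) in the closed disk of radius `r` satisfies `n(r) ≤ 2σ(2e)^ρ r^ρ`
for all `r ≥ r₁ = max(r₀, (2C₁)^{1/μ}, (1/(2e))·(ln(2C₀)/σ)^{1/ρ})`. -/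
theorem zero_counting_bound
    (C0 C1 σ μ ρ r0 : ℝ) (hC0 : 0 < C0) (hC1 : 0 < C1) (hσ : 0 < σ) (hμ : 0 < μ)
    (hρ : 0 < ρ) (hr0 : 1 ≤ r0) (ψ : ℂ → ℂ) (hψ : Differentiable ℂ ψ)
    (hgrowth : ∀ z : ℂ, r0 ≤ ‖z‖ → ‖ψ z‖ ≤ C0 * Real.exp (σ * ‖z‖ ^ ρ))
    (hray : ∀ x : ℝ, r0 ≤ x → ‖ψ (x : ℂ) - 1‖ ≤ C1 * x ^ (-μ)) :
    ∀ r : ℝ,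
      max (max r0 ((2 * C1) ^ (1 / μ)))
        ((1 / (2 * Real.exp 1)) * (Real.log (2 * C0) / σ) ^ (1 / ρ)) ≤ r →
      ((∑ᶠ z ∈ Metric.closedBall (0 : ℂ) r, (analyticOrderAt ψ z).toNat : ℕ) : ℝ) ≤
        2 * σ * (2 * Real.exp 1) ^ ρ * r ^ ρ := by
  intro r hr
  simp only [max_le_iff] at hr
  obtain ⟨⟨hr0r, hC1r⟩, hC0r⟩ := hr
  have hr_pos : 0 < r := by linarith
  have he : 2 ≤ exp 1 := by linarith [add_one_le_exp 1]
  set R := 2 * exp 1 * r with hR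
  have hrR : r < R := by nlinarith
  have hψr : 1 / 2 ≤ ‖ψ r‖ := by
    have := (hray r hr0r).trans (mul_rpow_neg_le_half hC1 hμ hr_pos hC1r)
    linarith [norm_sub_norm_le (1 : ℂ) (ψ r), norm_sub_rev (ψ r) 1, norm_one (α := ℂ)]
  have hM : ∀ z ∈ sphere (0 : ℂ) R, ‖ψ z‖ ≤ C0 * exp (σ * R ^ ρ) := fun z hz => by
    rw [← mem_sphere_zero_iff_norm.mp hz]
    exact hgrowth z (by rw [mem_sphere_zero_iff_norm.mp hz]; linarith)
  have hzeros := Complex.pow_zeroCountOn_mul_norm_le hr_pos.le hrR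
    (by simp [abs_of_pos hr_pos, hrR.le]) (exp_pos 1).le
    (fun a ha => Complex.mul_mul_norm_sub_le hr_pos (by linarith) (mem_closedBall_zero_iff.mp ha))
    hψ hM
  have hlog : log (2 * C0) ≤ σ * R ^ ρ :=
    log_le_mul_rpow hσ hρ (by positivity) (by
      rw [one_div_mul_eq_div, div_le_iff₀ (by positivity)] at hC0r
      linarith)
  have hn : (zeroCountOn ψ (closedBall 0 r) : ℝ) ≤ log (2 * C0) + σ * R ^ ρ := by
    have : (zeroCountOn ψ (closedBall 0 r) : ℝ) ≤ log (2 * C0 * exp (σ * R ^ ρ)) := by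
      rw [le_log_iff_exp_le (by positivity), ← exp_one_pow]
      nlinarith [pow_pos (exp_pos 1) (zeroCountOn ψ (closedBall 0 r))]
    rwa [log_mul (by positivity) (exp_pos _).ne', log_exp] at this
  calc (zeroCountOn ψ (closedBall 0 r) : ℝ) ≤ 2 * σ * R ^ ρ := by linarith
    _ = 2 * σ * (2 * exp 1) ^ ρ * r ^ ρ := by rw [hR, mul_rpow (by positivity) hr_pos.le]; ring
end

section
/- Let σ, ρ > 0, r1 ≥ 1, and let (z_n) be a sequence of nonzero complex numbers such that for every r ≥ r1 the number of indices n with |z_n| ≤ r is at most 2σ·(2e)^ρ·r^ρ. Let p be a natural number with p + 1 > ρ, and set C2 = 2σ(p+1)(2e)^ρ/(p+1−ρ). Then for every R ≥ r1, Σ_{n : |z_n| ≥ R} |z_n|^{−(p+1)} ≤ C2·R^{ρ−p−1}. -/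
/-!
Layer-cake argument: for `x ≥ R > 0` we have `x^(-q) = q ∫_R^∞ 1_{t > x} t^(-q-1) dt`.
Summing over the terms with `|z_n| ≥ R` and exchanging sum and integral, the integrand
becomes `N(t) t^(-q-1)`, where `N(t) ≤ A t^ρ` counts the terms in the disk of radius `t`.
Hence the tail sum is at most `q A ∫_R^∞ t^(ρ-q-1) dt = q A R^(ρ-q) / (q - ρ)`.
-/

open MeasureTheory Set

theorem rpow_neg_eq_mul_setIntegral_indicator {q R x : ℝ} (hq : 0 < q) (hR : 0 < R)
    (hRx : R ≤ x) :
    x ^ (-q) = q * ∫ t in Ioi R, (Ioi x).indicator (fun t => t ^ (-q - 1)) t := by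
  rw [setIntegral_indicator measurableSet_Ioi, Ioi_inter_Ioi, sup_eq_right.mpr hRx,
    integral_Ioi_rpow_of_lt (by linarith) (hR.trans_le hRx), sub_add_cancel]
  field_simp

theorem card_filter_lt_le_ncard {ι : Type*} {P : ι → Prop} (a : ι → ℝ) (s : Finset {i // P i})
    {t : ℝ} (hfin : {i | a i ≤ t}.Finite) :
    (s.filter fun i => a i.1 < t).card ≤ {i | a i ≤ t}.ncard := by
  rw [← ncard_coe_finset]
  refine ncard_le_ncard_of_injOn Subtype.val (fun i hi => ?_) Subtype.val_injective.injOn hfin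
  exact (Finset.mem_filter.mp hi).2.le

theorem sum_indicator_Ioi_eq_card_smul {ι : Type*} (s : Finset ι) (a : ι → ℝ) (g : ℝ → ℝ)
    (t : ℝ) :
    ∑ i ∈ s, (Ioi (a i)).indicator g t = (s.filter fun i => a i < t).card • g t := by
  classical
  simp only [indicator_apply, mem_Ioi]
  rw [← Finset.sum_filter, Finset.sum_const]

variable {ι : Type*} {a : ι → ℝ} {A R ρ q : ℝ}

theorem sum_rpow_neg_le_of_ncard_le (hR : 0 < R) (hq : 0 < q) (hρq : ρ < q)
    (hcount : ∀ t, R < t → {i | a i ≤ t}.Finite ∧ ({i | a i ≤ t}.ncard : ℝ) ≤ A * t ^ ρ)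
    (s : Finset {i // R ≤ a i}) :
    ∑ i ∈ s, a i ^ (-q) ≤ q * A / (q - ρ) * R ^ (ρ - q) := by
  have hexp : -q - 1 < -1 := by linarith
  have hexp' : ρ - q - 1 < -1 := by linarith
  have hint : ∀ i ∈ s, IntegrableOn ((Ioi (a i)).indicator fun t => t ^ (-q - 1)) (Ioi R) :=
    fun i _ => (integrableOn_Ioi_rpow_of_lt hexp hR).indicator measurableSet_Ioi
  have hpointwise : ∀ t ∈ Ioi R,
      ∑ i ∈ s, (Ioi (a i)).indicator (fun t => t ^ (-q - 1)) t ≤ A * t ^ (ρ - q - 1) := by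
    intro t (ht : R < t)
    have ht0 : 0 < t := hR.trans ht
    obtain ⟨hfin, hcard⟩ := hcount t ht
    have hcard' : ((s.filter fun i => a i.1 < t).card : ℝ) ≤ A * t ^ ρ :=
      le_trans (by exact_mod_cast card_filter_lt_le_ncard a s hfin) hcard
    calc ∑ i ∈ s, (Ioi (a i)).indicator (fun t => t ^ (-q - 1)) t
        = (s.filter fun i => a i.1 < t).card * t ^ (-q - 1) := by
          rw [sum_indicator_Ioi_eq_card_smul, nsmul_eq_mul]
      _ ≤ A * t ^ ρ * t ^ (-q - 1) := by gcongr
      _ = A * t ^ (ρ - q - 1) := by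
          rw [mul_assoc, ← Real.rpow_add ht0]
          ring_nf
  calc ∑ i ∈ s, a i ^ (-q)
      = q * ∑ i ∈ s, ∫ t in Ioi R, (Ioi (a i)).indicator (fun t => t ^ (-q - 1)) t := by
        rw [Finset.mul_sum]
        exact Finset.sum_congr rfl fun i _ => rpow_neg_eq_mul_setIntegral_indicator hq hR i.2
    _ = q * ∫ t in Ioi R, ∑ i ∈ s, (Ioi (a i)).indicator (fun t => t ^ (-q - 1)) t := by
        rw [integral_finsetSum s hint]
    _ ≤ q * ∫ t in Ioi R, A * t ^ (ρ - q - 1) := by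
        refine mul_le_mul_of_nonneg_left ?_ hq.le
        exact setIntegral_mono_on (integrable_finsetSum s hint)
          ((integrableOn_Ioi_rpow_of_lt hexp' hR).const_mul A) measurableSet_Ioi hpointwise
    _ = q * A / (q - ρ) * R ^ (ρ - q) := by
        rw [integral_const_mul, integral_Ioi_rpow_of_lt hexp' hR, sub_add_cancel]
        have : ρ - q ≠ 0 := by linarith
        have : q - ρ ≠ 0 := by linarith
        field_simp
        ring

theorem summable_rpow_neg_and_tsum_le_of_ncard_le (hR : 0 < R) (hq : 0 < q) (hρq : ρ < q)
    (hcount : ∀ t, R < t → {i | a i ≤ t}.Finite ∧ ({i | a i ≤ t}.ncard : ℝ) ≤ A * t ^ ρ) :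
    Summable (fun i : {i // R ≤ a i} => a i ^ (-q)) ∧
      ∑' i : {i // R ≤ a i}, a i ^ (-q) ≤ q * A / (q - ρ) * R ^ (ρ - q) := by
  have hsum := sum_rpow_neg_le_of_ncard_le hR hq hρq hcount
  have hs : Summable (fun i : {i // R ≤ a i} => a i ^ (-q)) :=
    summable_of_sum_le (fun i => Real.rpow_nonneg (hR.le.trans i.2) _) hsum
  exact ⟨hs, hs.tsum_le_of_sum_le hsum⟩

theorem tail_sum_bound_general
    (σ ρ : ℝ) (r1 : ℝ) (hr1 : 1 ≤ r1)
    (z : ℕ → ℂ)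
    (hcount : ∀ r : ℝ, r1 ≤ r → {n : ℕ | ‖z n‖ ≤ r}.Finite ∧
      ({n : ℕ | ‖z n‖ ≤ r}.ncard : ℝ) ≤ 2 * σ * (2 * Real.exp 1) ^ ρ * r ^ ρ)
    (p : ℕ) (hp : ρ < p + 1) :
    ∀ R : ℝ, r1 ≤ R →
      Summable (fun n : {n : ℕ // R ≤ ‖z n‖} => ‖z (n : ℕ)‖ ^ (-(p + 1 : ℝ))) ∧
      ∑' n : {n : ℕ // R ≤ ‖z n‖}, ‖z (n : ℕ)‖ ^ (-(p + 1 : ℝ)) ≤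
        (2 * σ * (p + 1) * (2 * Real.exp 1) ^ ρ / (p + 1 - ρ)) * R ^ (ρ - p - 1) := by
  intro R hR
  obtain ⟨hs, hle⟩ := summable_rpow_neg_and_tsum_le_of_ncard_le (a := fun n => ‖z n‖)
    (by linarith) (by positivity) hp fun t ht => hcount t (hR.trans ht.le)
  refine ⟨hs, hle.trans_eq ?_⟩
  rw [sub_add_eq_sub_sub]
  ring

/-- if the number of terms of a sequence `(z_n)` of nonzero complex numbers
in the disk `|z| ≤ r` is at most `2σ(2e)^ρ r^ρ` for all `r ≥ r₁`, then for `p + 1 > ρ`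
and `R ≥ r₁` the tail sum `Σ_{|z_n| ≥ R} |z_n|^{-(p+1)}` converges and is at most
`C₂ R^{ρ-p-1}` with `C₂ = 2σ(p+1)(2e)^ρ/(p+1-ρ)`. -/
theorem tail_sum_bound
    (σ ρ : ℝ) (hσ : 0 < σ) (hρ : 0 < ρ) (r1 : ℝ) (hr1 : 1 ≤ r1)
    (z : ℕ → ℂ) (hz : ∀ n, z n ≠ 0)
    (hcount : ∀ r : ℝ, r1 ≤ r → {n : ℕ | ‖z n‖ ≤ r}.Finite ∧
      ({n : ℕ | ‖z n‖ ≤ r}.ncard : ℝ) ≤ 2 * σ * (2 * Real.exp 1) ^ ρ * r ^ ρ)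
    (p : ℕ) (hp : ρ < p + 1) :
    ∀ R : ℝ, r1 ≤ R →
      Summable (fun n : {n : ℕ // R ≤ ‖z n‖} => ‖z (n : ℕ)‖ ^ (-(p + 1 : ℝ))) ∧
      ∑' n : {n : ℕ // R ≤ ‖z n‖}, ‖z (n : ℕ)‖ ^ (-(p + 1 : ℝ)) ≤
        (2 * σ * (p + 1) * (2 * Real.exp 1) ^ ρ / (p + 1 - ρ)) * R ^ (ρ - p - 1) :=
  tail_sum_bound_general σ ρ r1 hr1 z hcount p hp
end

section
/- Let p ≥ 1 be a natural number, μ > 0, C1 > 0, r > 0, and let g(z) = a_0 + a_1 z + … + a_p z^p be a complex polynomial of degree at most p. Suppose that for every real z in the segment [r, (p+1)r] one has |e^{g(z)} − 1| ≤ C1·z^{−μ}, and set ε = C1·r^{−μ}. Let A_p = A_p(μ) be the Vandermonde cofactor constant. If ε ≤ 1/2 and ε·A_p ≤ 1/4, then for every z in the closed disk |z| ≤ r one has |e^{g(z)} − 1| ≤ 2·ε·A_p. -/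
noncomputable section

/-- The `(p+1)×(p+1)` Vandermonde matrix with entries `c_{kj} = k^{j-1}`, `k, j = 1, …, p+1`. -/
def vmat (p : ℕ) : Matrix (Fin (p + 1)) (Fin (p + 1)) ℝ :=
  fun k j => ((k : ℕ) + 1 : ℝ) ^ (j : ℕ)

/-- Its determinant `W = 1!·2!·…·p!`. -/
def Wdet (p : ℕ) : ℝ := (vmat p).det

/-- The cofactor `W_{kj}` of the entry in (1-based) row `k+1`, column `j+1`. -/
def cofactor (p : ℕ) (k j : Fin (p + 1)) : ℝ :=
  (-1) ^ ((k : ℕ) + (j : ℕ)) * ((vmat p).submatrix k.succAbove j.succAbove).det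

/-- The Vandermonde cofactor constant `A_p(μ) = (1/W)·Σ_k Σ_j |W_{kj}|·k^{-μ}`. -/
def Ap (p : ℕ) (μ : ℝ) : ℝ :=
  (1 / Wdet p) * ∑ k : Fin (p + 1), ∑ j : Fin (p + 1),
    |cofactor p k j| * ((k : ℕ) + 1 : ℝ) ^ (-μ)

/-!
Since `A_p ≥ 1`, on the segment `e^g` stays within `ε ≤ 1/4` of `1`, so `x ↦ g x - log (e^{g x})`
is continuous with values in `2πiℤ`, hence equal to a constant `c` with `e^c = 1`. At the nodes `x_k = k r`
(`k = 1, …, p+1`) the polynomial `t ↦ g (r t) - c` therefore takes the values `log (e^{g x_k})`,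
of size at most `(7/6) ε k^{-μ}`. Inverting the Vandermonde system by Cramer's rule bounds each
coefficient of `g (r t) - c`, hence its modulus on `‖t‖ ≤ 1`, by `(7/6) ε A_p ≤ 7/24`; finally
`‖e^w - 1‖ ≤ ‖w‖ + ‖w‖² ≤ 2 ε A_p`.
-/

open Complex Finset Matrix

theorem vmat_eq_vandermonde (p : ℕ) :
    vmat p = Matrix.vandermonde fun k : Fin (p + 1) => ((k : ℕ) + 1 : ℝ) := rfl

theorem Wdet_pos (p : ℕ) : 0 < Wdet p := by
  rw [Wdet, vmat_eq_vandermonde, Matrix.det_vandermonde]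
  refine prod_pos fun i _ => prod_pos fun j hj => ?_
  have hij : ((i : ℕ) : ℝ) < (j : ℕ) := by exact_mod_cast (mem_Ioi.mp hj : i < j)
  linarith

theorem Wdet_eq_sum_cofactor (p : ℕ) : Wdet p = ∑ j, cofactor p 0 j := by
  rw [Wdet, Matrix.det_succ_row _ 0]
  simp [cofactor, vmat]

theorem one_le_Ap (p : ℕ) (μ : ℝ) : 1 ≤ Ap p μ := by
  rw [Ap, one_div, ← div_eq_inv_mul, le_div_iff₀ (Wdet_pos p), one_mul]
  calc Wdet p ≤ ∑ j, |cofactor p 0 j| := by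
        rw [Wdet_eq_sum_cofactor]; exact (le_abs_self _).trans (abs_sum_le_sum_abs _ _)
    _ = ∑ j, |cofactor p 0 j| * (((0 : Fin (p + 1)) : ℕ) + 1 : ℝ) ^ (-μ) := by simp
    _ ≤ _ := single_le_sum
        (f := fun k : Fin (p + 1) => ∑ j, |cofactor p k j| * ((k : ℕ) + 1 : ℝ) ^ (-μ))
        (fun k _ => by positivity) (mem_univ 0)

theorem inv_vmat_apply (p : ℕ) (j k : Fin (p + 1)) :
    (vmat p)⁻¹ j k = cofactor p k j / Wdet p := by
  rw [Matrix.inv_def, Matrix.smul_apply, Matrix.adjugate_fin_succ_eq_det_submatrix, smul_eq_mul,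
    Ring.inverse_eq_inv, div_eq_inv_mul]
  rfl

theorem Matrix.map_inv_mulVec_map_mulVec {n R S : Type*} [Fintype n] [DecidableEq n] [CommRing R]
    [CommRing S] (f : R →+* S) {M : Matrix n n R} (hM : IsUnit M.det) (v : n → S) :
    M⁻¹.map f *ᵥ (M.map f *ᵥ v) = v := by
  rw [mulVec_mulVec, ← Matrix.map_mul, nonsing_inv_mul _ hM, Matrix.map_one _ f.map_zero f.map_one,
    one_mulVec]

theorem Matrix.norm_map_ofReal_mulVec_le {n : Type*} [Fintype n] (N : Matrix n n ℝ) (v : n → ℂ)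
    (j : n) : ‖(N.map ofReal *ᵥ v) j‖ ≤ ∑ k, |N j k| * ‖v k‖ := by
  refine (norm_sum_le _ _).trans_eq ?_
  simp [Matrix.map_apply]

theorem norm_sum_mul_pow_le_sum_norm {ι 𝕜 : Type*} [NormedRing 𝕜] [NormOneClass 𝕜]
    (s : Finset ι) (e : ι → ℕ) (δ : ι → 𝕜) {t : 𝕜} (ht : ‖t‖ ≤ 1) :
    ‖∑ j ∈ s, δ j * t ^ e j‖ ≤ ∑ j ∈ s, ‖δ j‖ := by
  refine (norm_sum_le _ _).trans (sum_le_sum fun j _ => ?_)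
  calc ‖δ j * t ^ e j‖ ≤ ‖δ j‖ * ‖t‖ ^ e j :=
        (norm_mul_le _ _).trans (by gcongr; exact norm_pow_le _ _)
    _ ≤ ‖δ j‖ := mul_le_of_le_one_right (norm_nonneg _) (pow_le_one₀ (norm_nonneg _) ht)

theorem norm_sum_mul_pow_le_mul_Ap (p : ℕ) (μ η : ℝ) (δ : Fin (p + 1) → ℂ)
    (hnode : ∀ k : Fin (p + 1),
      ‖∑ j, δ j * ((k : ℕ) + 1 : ℂ) ^ (j : ℕ)‖ ≤ η * ((k : ℕ) + 1 : ℝ) ^ (-μ))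
    {t : ℂ} (ht : ‖t‖ ≤ 1) : ‖∑ j, δ j * t ^ (j : ℕ)‖ ≤ η * Ap p μ := by
  set d := (vmat p).map ofReal *ᵥ δ
  have hd : ∀ k, ‖d k‖ ≤ η * ((k : ℕ) + 1 : ℝ) ^ (-μ) := fun k => by
    convert hnode k using 2
    simp [d, mulVec, dotProduct, vmat, mul_comm]
  have hδ : δ = (vmat p)⁻¹.map ofReal *ᵥ d :=
    (map_inv_mulVec_map_mulVec ofRealHom (Wdet_pos p).ne'.isUnit δ).symm
  calc ‖∑ j, δ j * t ^ (j : ℕ)‖ ≤ ∑ j, ‖δ j‖ := norm_sum_mul_pow_le_sum_norm _ _ _ ht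
    _ ≤ ∑ j, ∑ k, |(vmat p)⁻¹ j k| * (η * ((k : ℕ) + 1 : ℝ) ^ (-μ)) := by
      gcongr with j
      rw [hδ]
      exact (norm_map_ofReal_mulVec_le _ _ _).trans (by gcongr with k; exact hd k)
    _ = η * Ap p μ := by
      simp_rw [inv_vmat_apply, abs_div, abs_of_pos (Wdet_pos p), Ap, mul_sum]
      rw [sum_comm]
      refine sum_congr rfl fun k _ => sum_congr rfl fun j _ => ?_
      ring

theorem sum_sub_single_zero_mul_pow {n : ℕ} (γ : Fin (n + 1) → ℂ) (c t : ℂ) :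
    ∑ j, (γ - Pi.single 0 c : Fin (n + 1) → ℂ) j * t ^ (j : ℕ) = ∑ j, γ j * t ^ (j : ℕ) - c := by
  simp [sub_mul, sum_sub_distrib, Pi.single_apply]

theorem norm_sum_mul_pow_sub_le_mul_Ap (p : ℕ) (μ η : ℝ) (γ : Fin (p + 1) → ℂ) (c : ℂ)
    (hnode : ∀ k : Fin (p + 1),
      ‖∑ j, γ j * ((k : ℕ) + 1 : ℂ) ^ (j : ℕ) - c‖ ≤ η * ((k : ℕ) + 1 : ℝ) ^ (-μ))
    {t : ℂ} (ht : ‖t‖ ≤ 1) : ‖∑ j, γ j * t ^ (j : ℕ) - c‖ ≤ η * Ap p μ := by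
  rw [← sum_sub_single_zero_mul_pow]
  exact norm_sum_mul_pow_le_mul_Ap p μ η _
    (fun k => by rw [sum_sub_single_zero_mul_pow]; exact hnode k) ht

theorem IsPreconnected.exists_forall_eq_log_exp_add {X : Type*} [TopologicalSpace X] {S : Set X}
    (hS : IsPreconnected S) {f : X → ℂ} (hf : ContinuousOn f S)
    (hslit : ∀ x ∈ S, exp (f x) ∈ slitPlane) :
    ∃ c, exp c = 1 ∧ ∀ x ∈ S, f x = log (exp (f x)) + c := by
  rcases S.eq_empty_or_nonempty with rfl | ⟨x₀, hx₀⟩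
  · exact ⟨0, exp_zero, by simp⟩
  set F := fun x => f x - log (exp (f x))
  have hF : ∀ x, exp (F x) = 1 := fun x => by
    simp only [F, exp_sub, exp_log (exp_ne_zero _), div_self (exp_ne_zero _)]
  have hmaps : Set.MapsTo F S (AddSubgroup.zmultiples (2 * Real.pi * I)) := fun x _ => by
    obtain ⟨n, hn⟩ := exp_eq_one_iff.mp (hF x)
    exact AddSubgroup.mem_zmultiples_iff.mpr ⟨n, by rw [hn, zsmul_eq_mul]⟩
  have hcont : ContinuousOn F S := hf.sub (hf.cexp.clog hslit)
  refine ⟨F x₀, hF x₀, fun x hx => ?_⟩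
  have hdisc : IsDiscrete (AddSubgroup.zmultiples (2 * Real.pi * I) : Set ℂ) :=
    isDiscrete_iff_discreteTopology.mpr (NormedSpace.discreteTopology_zmultiples _)
  rw [← hS.constant_of_mapsTo hdisc hcont hmaps hx hx₀]
  ring

theorem norm_log_le_of_norm_sub_one_le_quarter {w : ℂ} (hw : ‖w - 1‖ ≤ 1 / 4) :
    ‖log w‖ ≤ 7 / 6 * ‖w - 1‖ := by
  have h := norm_log_one_add_le (hw.trans_lt (by norm_num))
  rw [add_sub_cancel] at h
  have hinv : (1 - ‖w - 1‖)⁻¹ ≤ 4 / 3 := by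
    rw [inv_le_comm₀ (by linarith) (by norm_num)]; linarith
  have := norm_nonneg (w - 1)
  nlinarith [mul_le_mul_of_nonneg_left hinv (sq_nonneg ‖w - 1‖)]

theorem norm_exp_sub_one_le_add_sq {x : ℂ} (hx : ‖x‖ ≤ 1) : ‖exp x - 1‖ ≤ ‖x‖ + ‖x‖ ^ 2 :=
  calc ‖exp x - 1‖ = ‖(exp x - 1 - x) + x‖ := by ring_nf
    _ ≤ ‖x‖ ^ 2 + ‖x‖ := norm_add_le_of_le (norm_exp_sub_one_sub_id_le hx) le_rfl
    _ = ‖x‖ + ‖x‖ ^ 2 := add_comm _ _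

theorem sum_mul_pow_mul {ι : Type*} (s : Finset ι) (e : ι → ℕ) (a : ι → ℂ) (w r : ℂ) :
    ∑ j ∈ s, a j * r ^ e j * w ^ e j = ∑ j ∈ s, a j * (w * r) ^ e j := by
  refine sum_congr rfl fun j _ => ?_
  ring

theorem natCast_succ_mul_mem_Icc {p : ℕ} (k : Fin (p + 1)) {r : ℝ} (hr : 0 ≤ r) :
    ((k : ℕ) + 1 : ℝ) * r ∈ Set.Icc r ((p + 1) * r) := by
  have hk : ((k : ℕ) : ℝ) ≤ p := by exact_mod_cast k.is_le
  constructor <;> nlinarith [(Nat.cast_nonneg k : (0 : ℝ) ≤ (k : ℕ))]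

theorem exp_polynomial_disk_estimate_general
    (p : ℕ) (μ C1 r : ℝ) (hμ : 0 < μ) (hC1 : 0 < C1) (hr : 0 < r)
    (a : Fin (p + 1) → ℂ)
    (hseg : ∀ x : ℝ, x ∈ Set.Icc r ((p + 1) * r) →
      ‖Complex.exp (∑ j : Fin (p + 1), a j * (x : ℂ) ^ (j : ℕ)) - 1‖ ≤ C1 * x ^ (-μ))
    (hεA : C1 * r ^ (-μ) * Ap p μ ≤ 1 / 4) :
    ∀ z : ℂ, ‖z‖ ≤ r →
      ‖Complex.exp (∑ j : Fin (p + 1), a j * z ^ (j : ℕ)) - 1‖ ≤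
        2 * (C1 * r ^ (-μ)) * Ap p μ := by
  intro z hz
  set ε := C1 * r ^ (-μ)
  set g : ℂ → ℂ := fun w => ∑ j, a j * w ^ (j : ℕ)
  have hε4 : ε ≤ 1 / 4 := by nlinarith [one_le_Ap p μ, (by positivity : 0 < ε)]
  have hsmall : ∀ x ∈ Set.Icc r ((p + 1) * r), ‖exp (g x) - 1‖ ≤ ε := fun x hx =>
    (hseg x hx).trans <|
      mul_le_mul_of_nonneg_left (Real.rpow_le_rpow_of_nonpos hr hx.1 (by linarith)) hC1.le
  obtain ⟨c, hc1, hc⟩ := isPreconnected_Icc.exists_forall_eq_log_exp_add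
    (f := fun x : ℝ => g x) (by fun_prop) fun x hx => by
      simpa using mem_slitPlane_of_norm_lt_one ((hsmall x hx).trans_lt (by linarith))
  have hnode : ∀ k : Fin (p + 1),
      ‖∑ j, a j * (r : ℂ) ^ (j : ℕ) * ((k : ℕ) + 1 : ℂ) ^ (j : ℕ) - c‖
        ≤ 7 / 6 * ε * ((k : ℕ) + 1 : ℝ) ^ (-μ) := fun k => by
    have hx := natCast_succ_mul_mem_Icc k hr.le
    rw [sum_mul_pow_mul,
      show ((k : ℕ) + 1 : ℂ) * r = ((((k : ℕ) + 1 : ℝ) * r : ℝ) : ℂ) by push_cast; rfl]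
    change ‖g _ - c‖ ≤ _
    rw [hc _ hx, add_sub_cancel_right]
    calc _ ≤ 7 / 6 * ‖exp (g _) - 1‖ :=
          norm_log_le_of_norm_sub_one_le_quarter ((hsmall _ hx).trans hε4)
      _ ≤ 7 / 6 * (C1 * (((k : ℕ) + 1 : ℝ) * r) ^ (-μ)) := by gcongr; exact hseg _ hx
      _ = _ := by rw [Real.mul_rpow (by positivity) hr.le]; ring
  have hh := norm_sum_mul_pow_sub_le_mul_Ap p μ _ _ c hnode (t := z / r)
    (by rw [norm_div, norm_real, Real.norm_of_nonneg hr.le]; exact div_le_one_of_le₀ hz hr.le)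
  rw [sum_mul_pow_mul, div_mul_cancel₀ z (ofReal_ne_zero.mpr hr.ne')] at hh
  change ‖exp (g z) - 1‖ ≤ _
  rw [← sub_add_cancel (g z) c, exp_add, hc1, mul_one]
  have := norm_nonneg (g z - c)
  calc _ ≤ ‖g z - c‖ + ‖g z - c‖ ^ 2 := norm_exp_sub_one_le_add_sq (by nlinarith)
    _ ≤ 2 * ε * Ap p μ := by nlinarith

/-- if `|e^{g(z)} - 1| ≤ C₁ z^{-μ}` on the segment `[r, (p+1)r]` for a
polynomial `g` of degree at most `p`, and `ε = C₁ r^{-μ} ≤ 1/2`, `ε·A_p ≤ 1/4`, then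
`|e^{g(z)} - 1| ≤ 2·ε·A_p` on the closed disk `|z| ≤ r`. -/
theorem exp_polynomial_disk_estimate
    (p : ℕ) (hp : 1 ≤ p) (μ C1 r : ℝ) (hμ : 0 < μ) (hC1 : 0 < C1) (hr : 0 < r)
    (a : Fin (p + 1) → ℂ)
    (hseg : ∀ x : ℝ, x ∈ Set.Icc r ((p + 1) * r) →
      ‖Complex.exp (∑ j : Fin (p + 1), a j * (x : ℂ) ^ (j : ℕ)) - 1‖ ≤ C1 * x ^ (-μ))
    (hε : C1 * r ^ (-μ) ≤ 1 / 2) (hεA : C1 * r ^ (-μ) * Ap p μ ≤ 1 / 4) :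
    ∀ z : ℂ, ‖z‖ ≤ r →
      ‖Complex.exp (∑ j : Fin (p + 1), a j * z ^ (j : ℕ)) - 1‖ ≤
        2 * (C1 * r ^ (-μ)) * Ap p μ :=
  exp_polynomial_disk_estimate_general p μ C1 r hμ hC1 hr a hseg hεA
end
end

section
/- Let γ > 1, C > 0, and let K : [0, ∞) → ℂ be a measurable function satisfying |K(t)| ≤ C·exp(−(t/2)^γ) for all t ≥ 0. Then the function ψ(z) = 1 + ∫_0^∞ K(t)·e^{izt} dt is well defined for all z ∈ ℂ, is entire, and has order of growth at most ρ(γ) = γ/(γ−1) and finite type: there exist constants C0 > 0 and σ > 0, depending only on C and γ, such that |ψ(z)| ≤ C0·exp(σ·|z|^{γ/(γ−1)}) for all z ∈ ℂ. -/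
/-!
Since `|e^{izt}| ≤ e^{|z| t}`, Young's inequality `(t/2)(2|z|) ≤ (t/2)^γ/γ + (2|z|)^q/q` for the
conjugate exponent `q = γ/(γ-1)` bounds `|K(t) e^{izt}|` by `C e^{(2|z|)^q/q} e^{-(t/2)^γ/q}`.
Hence `K` has exponential moments of every order, so the integrand and its `z`-derivative are
locally uniformly dominated: the integral is entire, and integrating the bound gives the growth
estimate with `σ = 2^q/q`.
-/

open MeasureTheory Set

theorem mul_sub_rpow_le {p q x y : ℝ} (hpq : p.HolderConjugate q) (hx : 0 ≤ x) (hy : 0 ≤ y) :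
    x * y - x ^ p ≤ y ^ q / q - x ^ p / q := by
  have hyoung := Real.young_inequality_of_nonneg hx hy hpq
  have hsum := hpq.inv_add_inv_eq_one
  simp only [div_eq_mul_inv] at hyoung ⊢
  linear_combination hyoung + x ^ p * hsum

open Complex in
theorem norm_cexp_I_mul_mul_le (z : ℂ) (t : ℝ) : ‖exp (I * z * t)‖ ≤ Real.exp (‖z‖ * |t|) := by
  rw [norm_exp, Real.exp_le_exp, show (I * z * t).re = -(z.im * t) by simp]
  calc -(z.im * t) ≤ |z.im| * |t| := abs_mul z.im t ▸ neg_le_abs _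
    _ ≤ ‖z‖ * |t| := by gcongr; exact abs_im_le_norm z

section ExponentialMoments

variable {μ : Measure ℝ} {K : ℝ → ℂ}

theorem integrable_mul_cexp_I_mul (hKm : AEStronglyMeasurable K μ)
    (hK : ∀ a ≥ 0, Integrable (fun t => ‖K t‖ * Real.exp (a * |t|)) μ) (z : ℂ) :
    Integrable (fun t : ℝ => K t * Complex.exp (Complex.I * z * t)) μ := by
  refine (hK ‖z‖ (norm_nonneg z)).mono' (hKm.mul (by fun_prop : Continuous _).aestronglyMeasurable)
    (ae_of_all _ fun t => ?_)
  rw [norm_mul]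
  exact mul_le_mul_of_nonneg_left (norm_cexp_I_mul_mul_le z t) (norm_nonneg _)

theorem norm_integral_mul_cexp_I_mul_le
    (hK : ∀ a ≥ 0, Integrable (fun t => ‖K t‖ * Real.exp (a * |t|)) μ) (z : ℂ) :
    ‖∫ t, K t * Complex.exp (Complex.I * z * t) ∂μ‖ ≤ ∫ t, ‖K t‖ * Real.exp (‖z‖ * |t|) ∂μ :=
  norm_integral_le_of_norm_le (hK ‖z‖ (norm_nonneg z)) <| ae_of_all _ fun t => by
    rw [norm_mul]
    exact mul_le_mul_of_nonneg_left (norm_cexp_I_mul_mul_le z t) (norm_nonneg _)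

theorem differentiable_integral_mul_cexp_I_mul (hKm : AEStronglyMeasurable K μ)
    (hK : ∀ a ≥ 0, Integrable (fun t => ‖K t‖ * Real.exp (a * |t|)) μ) :
    Differentiable ℂ (fun z : ℂ => ∫ t, K t * Complex.exp (Complex.I * z * t) ∂μ) := by
  intro z₀
  set F' : ℂ → ℝ → ℂ := fun z t => K t * (Complex.exp (Complex.I * z * t) * (Complex.I * t))
  have hderiv (t : ℝ) (z : ℂ) :
      HasDerivAt (fun z : ℂ => K t * Complex.exp (Complex.I * z * t)) (F' z t) z := by
    have : HasDerivAt (fun z : ℂ => Complex.I * z * t) (Complex.I * t) z := by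
      simpa using ((hasDerivAt_id z).const_mul Complex.I).mul_const (t : ℂ)
    exact this.cexp.const_mul (K t)
  -- `|t| ≤ e^{|t|}` absorbs the factor `t` of the derivative into one more exponential moment.
  have hbound (t : ℝ) (z : ℂ) (hz : z ∈ Metric.ball z₀ 1) :
      ‖F' z t‖ ≤ ‖K t‖ * Real.exp ((‖z₀‖ + 2) * |t|) := by
    have hz' : ‖z‖ ≤ ‖z₀‖ + 1 := by
      have := norm_le_norm_add_norm_sub' z z₀
      rw [mem_ball_iff_norm] at hz
      linarith
    have ht : |t| ≤ Real.exp |t| := by linarith [Real.add_one_le_exp |t|]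
    simp only [F', norm_mul, Complex.norm_I, Complex.norm_real, Real.norm_eq_abs, one_mul]
    gcongr ‖K t‖ * ?_
    calc ‖Complex.exp (Complex.I * z * t)‖ * |t| ≤ Real.exp (‖z‖ * |t|) * Real.exp |t| := by
          gcongr
          exact norm_cexp_I_mul_mul_le z t
      _ = Real.exp ((‖z‖ + 1) * |t|) := by rw [← Real.exp_add]; ring_nf
      _ ≤ Real.exp ((‖z₀‖ + 2) * |t|) := by gcongr Real.exp (?_ * _); linarith
  exact (hasDerivAt_integral_of_dominated_loc_of_deriv_le (Metric.ball_mem_nhds z₀ one_pos)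
    (.of_forall fun z => (integrable_mul_cexp_I_mul hKm hK z).aestronglyMeasurable)
    (integrable_mul_cexp_I_mul hKm hK z₀)
    (hKm.mul (by fun_prop : Continuous _).aestronglyMeasurable)
    (ae_of_all _ hbound) (hK _ (by positivity))
    (ae_of_all _ fun t z _ => hderiv t z)).2.differentiableAt

end ExponentialMoments

theorem integrableOn_exp_neg_half_rpow_div {p b : ℝ} (hp : 0 < p) (hb : 0 < b) :
    IntegrableOn (fun t : ℝ => Real.exp (-((t / 2) ^ p / b))) (Ioi 0) := by
  refine (integrableOn_rpow_mul_exp_neg_mul_rpow (s := 0) (by norm_num) hp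
    (by positivity : 0 < 1 / (b * 2 ^ p))).congr_fun (fun t ht => ?_) measurableSet_Ioi
  dsimp only
  rw [Real.rpow_zero, one_mul, Real.div_rpow (le_of_lt ht) zero_le_two]
  congr 1
  field_simp

section SuperexponentialDecay

variable {p q C : ℝ} {K : ℝ → ℂ}

theorem norm_mul_exp_le_of_norm_le_exp_neg_rpow (hpq : p.HolderConjugate q) (hC : 0 ≤ C)
    {k : ℂ} {a t : ℝ} (ha : 0 ≤ a) (ht : 0 ≤ t) (hk : ‖k‖ ≤ C * Real.exp (-(t / 2) ^ p)) :
    ‖k‖ * Real.exp (a * t) ≤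
      C * Real.exp ((2 * a) ^ q / q) * Real.exp (-((t / 2) ^ p / q)) := by
  have hyoung := mul_sub_rpow_le hpq (by positivity : 0 ≤ t / 2) (by positivity : 0 ≤ 2 * a)
  calc ‖k‖ * Real.exp (a * t) ≤ C * Real.exp (-(t / 2) ^ p) * Real.exp (a * t) := by gcongr
    _ = C * Real.exp (t / 2 * (2 * a) - (t / 2) ^ p) := by
        rw [mul_assoc, ← Real.exp_add]; ring_nf
    _ ≤ C * Real.exp ((2 * a) ^ q / q - (t / 2) ^ p / q) := by gcongr
    _ = C * Real.exp ((2 * a) ^ q / q) * Real.exp (-((t / 2) ^ p / q)) := by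
        rw [mul_assoc, ← Real.exp_add, sub_eq_add_neg]

theorem ae_norm_mul_exp_le_of_norm_le_exp_neg_rpow (hpq : p.HolderConjugate q) (hC : 0 ≤ C)
    (hKb : ∀ t : ℝ, 0 ≤ t → ‖K t‖ ≤ C * Real.exp (-(t / 2) ^ p)) {a : ℝ} (ha : 0 ≤ a) :
    ∀ᵐ t ∂volume.restrict (Ioi 0), ‖K t‖ * Real.exp (a * |t|) ≤
      C * Real.exp ((2 * a) ^ q / q) * Real.exp (-((t / 2) ^ p / q)) := by
  filter_upwards [ae_restrict_mem measurableSet_Ioi] with t (ht : 0 < t)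
  rw [abs_of_pos ht]
  exact norm_mul_exp_le_of_norm_le_exp_neg_rpow hpq hC ha ht.le (hKb t ht.le)

theorem integrableOn_norm_mul_exp_of_norm_le_exp_neg_rpow (hpq : p.HolderConjugate q)
    (hC : 0 ≤ C) (hKm : AEStronglyMeasurable K (volume.restrict (Ioi 0)))
    (hKb : ∀ t : ℝ, 0 ≤ t → ‖K t‖ ≤ C * Real.exp (-(t / 2) ^ p)) (a : ℝ) (ha : 0 ≤ a) :
    IntegrableOn (fun t => ‖K t‖ * Real.exp (a * |t|)) (Ioi 0) :=
  ((integrableOn_exp_neg_half_rpow_div hpq.pos hpq.symm.pos).const_mul _).mono'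
    (hKm.norm.mul (by fun_prop : Continuous _).aestronglyMeasurable)
    ((ae_norm_mul_exp_le_of_norm_le_exp_neg_rpow hpq hC hKb ha).mono fun t ht => by
      rwa [Real.norm_of_nonneg (by positivity)])

theorem setIntegral_norm_mul_exp_le_of_norm_le_exp_neg_rpow (hpq : p.HolderConjugate q)
    (hC : 0 ≤ C) (hKm : AEStronglyMeasurable K (volume.restrict (Ioi 0)))
    (hKb : ∀ t : ℝ, 0 ≤ t → ‖K t‖ ≤ C * Real.exp (-(t / 2) ^ p)) {a : ℝ} (ha : 0 ≤ a) :
    ∫ t in Ioi 0, ‖K t‖ * Real.exp (a * |t|) ≤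
      C * Real.exp ((2 * a) ^ q / q) * ∫ t in Ioi 0, Real.exp (-((t / 2) ^ p / q)) := by
  rw [← integral_const_mul]
  exact integral_mono_ae (integrableOn_norm_mul_exp_of_norm_le_exp_neg_rpow hpq hC hKm hKb a ha)
    ((integrableOn_exp_neg_half_rpow_div hpq.pos hpq.symm.pos).const_mul _)
    (ae_norm_mul_exp_le_of_norm_le_exp_neg_rpow hpq hC hKb ha)

end SuperexponentialDecay

/-- for a measurable kernel `K` with `|K(t)| ≤ C·exp(-(t/2)^γ)`, `γ > 1`,
the function `ψ(z) = 1 + ∫_0^∞ K(t)e^{izt} dt` is well defined (the integrand is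
integrable for every `z`), entire, and of order at most `γ/(γ-1)` and finite type:
`|ψ(z)| ≤ C₀·exp(σ|z|^{γ/(γ-1)})` for some `C₀, σ > 0` depending only on `C` and `γ`. -/
theorem jost_function_entire_of_superexponential_kernel
    (γ C : ℝ) (hγ : 1 < γ) (hC : 0 < C) (K : ℝ → ℂ) (hKm : Measurable K)
    (hKb : ∀ t : ℝ, 0 ≤ t → ‖K t‖ ≤ C * Real.exp (-(t / 2) ^ γ)) :
    (∀ z : ℂ, IntegrableOn (fun t : ℝ => K t * Complex.exp (Complex.I * z * t))
      (Set.Ioi 0)) ∧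
    Differentiable ℂ (fun z : ℂ =>
      1 + ∫ t in Set.Ioi (0 : ℝ), K t * Complex.exp (Complex.I * z * t)) ∧
    ∃ C0 : ℝ, 0 < C0 ∧ ∃ σ : ℝ, 0 < σ ∧ ∀ z : ℂ,
      ‖1 + ∫ t in Set.Ioi (0 : ℝ), K t * Complex.exp (Complex.I * z * t)‖ ≤
        C0 * Real.exp (σ * ‖z‖ ^ (γ / (γ - 1))) := by
  set q := γ / (γ - 1)
  have hpq : γ.HolderConjugate q := .conjExponent hγ
  have hq : 0 < q := hpq.symm.pos
  have hKm' : AEStronglyMeasurable K (volume.restrict (Ioi 0)) := hKm.aestronglyMeasurable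
  have hK := integrableOn_norm_mul_exp_of_norm_le_exp_neg_rpow hpq hC.le hKm' hKb
  set W := ∫ t in Ioi 0, Real.exp (-((t / 2) ^ γ / q))
  have hW : 0 ≤ W := integral_nonneg fun t => (Real.exp_pos _).le
  refine ⟨integrable_mul_cexp_I_mul hKm' hK,
    (differentiable_integral_mul_cexp_I_mul hKm' hK).const_add 1,
    1 + C * W, by positivity, 2 ^ q / q, by positivity, fun z => ?_⟩
  have hexp : 1 ≤ Real.exp (2 ^ q / q * ‖z‖ ^ q) := Real.one_le_exp (by positivity)
  calc ‖1 + ∫ t in Ioi 0, K t * Complex.exp (Complex.I * z * t)‖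
      ≤ 1 + ∫ t in Ioi 0, ‖K t‖ * Real.exp (‖z‖ * |t|) :=
        (norm_add_le _ _).trans <| by
          rw [norm_one]; gcongr; exact norm_integral_mul_cexp_I_mul_le hK z
    _ ≤ 1 + C * Real.exp ((2 * ‖z‖) ^ q / q) * W := by
        gcongr
        exact setIntegral_norm_mul_exp_le_of_norm_le_exp_neg_rpow hpq hC.le hKm' hKb (norm_nonneg z)
    _ ≤ (1 + C * W) * Real.exp (2 ^ q / q * ‖z‖ ^ q) := by
        rw [Real.mul_rpow zero_le_two (norm_nonneg z), mul_div_right_comm]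
        nlinarith [mul_nonneg hC.le hW]
end
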